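/- arXiv:2409.01869 — 2 statements merged into one kernel-verified Lean document; each statement's English description precedes it below -/
import Mathlib

section
/- If Ḡ contains a directed path from (s,1) to (t,2) that visits all 2·|V| vertices of V × {1,2} (each exactly once), then G contains a Hamiltonian s-t path; concretely, such a path in Ḡ has the form (v₁,1),(v₁,2),(v₂,1),(v₂,2),…,(v_{|V|},1),(v_{|V|},2) with v₁ = s and v_{|V|} = t, and the sequence v₁, v₂, …, v_{|V|} is a Hamiltonian s-t path in G. -/
/-- The directed graph Ḡ on `V × Bool` (`false` = first copy, `true` = second copy):
edges `(v,1) → (v,2)` for every `v`, and `(i,2) → (j,1)` whenever `{i,j} ∈ E`. -/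
def DbarAdj {V : Type*} (G : SimpleGraph V) : V × Bool → V × Bool → Prop :=
  fun a b =>
    (a.2 = false ∧ b.2 = true ∧ b.1 = a.1) ∨
    (a.2 = true ∧ b.2 = false ∧ G.Adj a.1 b.1)

/-- The sequence `(v₁,1),(v₁,2),(v₂,1),(v₂,2),…` obtained from `v₁,v₂,…`. -/
def doubleList {V : Type*} (vs : List V) : List (V × Bool) :=
  (vs.map fun v => [(v, false), (v, true)]).flatten

/-!
In Ḡ the only edge out of `(v,1)` goes to `(v,2)`, and edges out of `(v,2)` go to first copies
of neighbours of `v`. So a walk that starts in the first copy and ends in the second one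
alternates `(v,1),(v,2)` blocks, with consecutive blocks joined by edges of `G`; the
Hamiltonicity of the walk then transfers to the sequence of block labels.
-/

section Doubling

variable {V : Type*}

@[simp]
lemma doubleList_nil : doubleList ([] : List V) = [] := rfl

@[simp]
lemma doubleList_cons (v : V) (vs : List V) :
    doubleList (v :: vs) = (v, false) :: (v, true) :: doubleList vs := rfl

@[simp]
lemma mem_doubleList {v : V} {b : Bool} {vs : List V} : (v, b) ∈ doubleList vs ↔ v ∈ vs := by
  induction vs with
  | nil => simp
  | cons w ws ih => cases b <;> simp [ih]

lemma head?_doubleList (vs : List V) :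
    (doubleList vs).head? = vs.head?.map fun v => (v, false) := by
  cases vs <;> rfl

lemma getLast?_doubleList (vs : List V) :
    (doubleList vs).getLast? = vs.getLast?.map fun v => (v, true) := by
  induction vs with
  | nil => rfl
  | cons w ws ih =>
    cases ws with
    | nil => rfl
    | cons u us =>
      simpa only [doubleList_cons, List.getLast?_cons_cons] using ih

lemma List.Nodup.of_doubleList {vs : List V} (h : (doubleList vs).Nodup) : vs.Nodup := by
  induction vs with
  | nil => exact List.nodup_nil
  | cons w ws ih =>
    simp only [doubleList_cons, List.nodup_cons, List.mem_cons, mem_doubleList] at h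
    exact List.nodup_cons.2 ⟨fun hw => h.1 (Or.inr hw), ih h.2.2⟩

variable {G : SimpleGraph V}

lemma dbarAdj_false_iff {v : V} {b : V × Bool} : DbarAdj G (v, false) b ↔ b = (v, true) := by
  simp [DbarAdj, Prod.ext_iff, and_comm]

lemma dbarAdj_true_iff {v : V} {b : V × Bool} :
    DbarAdj G (v, true) b ↔ b.2 = false ∧ G.Adj v b.1 := by
  simp [DbarAdj]

theorem exists_eq_doubleList_of_isChain :
    ∀ {l : List (V × Bool)}, l.IsChain (DbarAdj G) →
      (∀ a ∈ l.head?, a.2 = false) → (∀ a ∈ l.getLast?, a.2 = true) →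
      ∃ vs : List V, l = doubleList vs ∧ vs.IsChain G.Adj
  | [], _, _, _ => ⟨[], rfl, List.isChain_nil⟩
  | [(v, b)], _, hhead, hlast => by
    simp only [List.head?_cons, Option.mem_def, Option.some.injEq, forall_eq'] at hhead
    simp [hhead] at hlast
  | (v, b) :: c :: rest, hchain, hhead, hlast => by
    simp only [List.head?_cons, Option.mem_def, Option.some.injEq, forall_eq'] at hhead
    subst hhead
    rw [List.isChain_cons_cons, dbarAdj_false_iff] at hchain
    obtain ⟨rfl, hchain⟩ := hchain
    have hrest_head : ∀ a ∈ rest.head?, a.2 = false ∧ G.Adj v a.1 := fun a ha =>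
      dbarAdj_true_iff.1 ((List.isChain_cons.1 hchain).1 a ha)
    have hrest_last : ∀ a ∈ rest.getLast?, a.2 = true := by
      cases rest with
      | nil => simp
      | cons _ _ => simpa only [List.getLast?_cons_cons] using hlast
    obtain ⟨vs, rfl, hvs⟩ := exists_eq_doubleList_of_isChain (List.isChain_cons.1 hchain).2
      (fun a ha => (hrest_head a ha).1) hrest_last
    refine ⟨v :: vs, rfl, List.isChain_cons.2 ⟨fun w hw => ?_, hvs⟩⟩
    simpa using (hrest_head (w, false) (by simp [head?_doubleList, Option.mem_def.1 hw])).2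

end Doubling

theorem stmt1_general {V : Type*} (G : SimpleGraph V)
    (s t : V) (l : List (V × Bool))
    (hchain : l.Chain' (DbarAdj G)) (hnodup : l.Nodup)
    (hhead : l.head? = some (s, false)) (hlast : l.getLast? = some (t, true))
    (hall : ∀ x : V × Bool, x ∈ l) :
    ∃ vs : List V, l = doubleList vs ∧ vs.head? = some s ∧ vs.getLast? = some t ∧
      vs.Chain' G.Adj ∧ vs.Nodup ∧ (∀ v : V, v ∈ vs) := by
  obtain ⟨vs, rfl, hvs⟩ := exists_eq_doubleList_of_isChain hchain (by simp [hhead])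
    (by simp [hlast])
  rw [head?_doubleList, Option.map_eq_some_iff] at hhead
  rw [getLast?_doubleList, Option.map_eq_some_iff] at hlast
  obtain ⟨_, hs, ⟨rfl, -⟩⟩ := hhead
  obtain ⟨_, ht, ⟨rfl, -⟩⟩ := hlast
  exact ⟨vs, rfl, hs, ht, hvs, hnodup.of_doubleList, fun v => mem_doubleList.1 (hall (v, false))⟩

/-- If `Ḡ` contains a directed path from `(s,1)` to `(t,2)` visiting every vertex of
`V × {1,2}` exactly once, then it has the form
`(v₁,1),(v₁,2),(v₂,1),(v₂,2),…,(v_{|V|},1),(v_{|V|},2)` with `v₁ = s`, `v_{|V|} = t`,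
and `v₁,…,v_{|V|}` is a Hamiltonian `s`-`t` path in `G`. -/
theorem stmt1 {V : Type*} [Fintype V] [DecidableEq V] (G : SimpleGraph V)
    (s t : V) (hst : s ≠ t) (l : List (V × Bool))
    (hchain : l.Chain' (DbarAdj G)) (hnodup : l.Nodup)
    (hhead : l.head? = some (s, false)) (hlast : l.getLast? = some (t, true))
    (hall : ∀ x : V × Bool, x ∈ l) :
    ∃ vs : List V, l = doubleList vs ∧ vs.head? = some s ∧ vs.getLast? = some t ∧
      vs.Chain' G.Adj ∧ vs.Nodup ∧ (∀ v : V, v ∈ vs) :=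
  stmt1_general G s t l hchain hnodup hhead hlast hall
end

section
/- (Correctness of the reduction in Theorem 1.) G contains a Hamiltonian s-t path if and only if Ḡ contains a directed Hamiltonian path from (s,1) to (t,2), i.e., a directed path from (s,1) to (t,2) visiting every vertex of V × {1,2} exactly once (equivalently, a directed path from (s,1) to (t,2) whose sequence of 2·|V| visited vertices alternates between the copy V×{1} and the copy V×{2}, starting in V×{1}). -/
section

variable {V : Type*} {G : SimpleGraph V}

@[simp]
theorem dbarAdj_false_left_iff {v : V} {y : V × Bool} :
    DbarAdj G (v, false) y ↔ y = (v, true) := by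
  obtain ⟨w, b⟩ := y
  cases b <;> simp [DbarAdj, eq_comm]

@[simp]
theorem dbarAdj_true_left_iff {v : V} {y : V × Bool} :
    DbarAdj G (v, true) y ↔ y.2 = false ∧ G.Adj v y.1 := by
  simp [DbarAdj]

def splitPath (vs : List V) : List (V × Bool) :=
  vs.flatMap fun v => [(v, false), (v, true)]

@[simp]
theorem splitPath_nil : splitPath ([] : List V) = [] := rfl

@[simp]
theorem splitPath_cons (v : V) (vs : List V) :
    splitPath (v :: vs) = (v, false) :: (v, true) :: splitPath vs := rfl

@[simp]
theorem mem_splitPath {vs : List V} {x : V × Bool} : x ∈ splitPath vs ↔ x.1 ∈ vs := by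
  induction vs with
  | nil => simp
  | cons v vs ih =>
    obtain ⟨w, b⟩ := x
    cases b <;> simp_all

theorem head?_splitPath (vs : List V) :
    (splitPath vs).head? = vs.head?.map (·, false) := by
  cases vs <;> rfl

theorem getLast?_splitPath (vs : List V) :
    (splitPath vs).getLast? = vs.getLast?.map (·, true) := by
  induction vs with
  | nil => rfl
  | cons v vs ih =>
    cases vs with
    | nil => rfl
    | cons w vs =>
      simp only [splitPath_cons, List.getLast?_cons_cons] at ih ⊢
      exact ih

theorem nodup_splitPath {vs : List V} : (splitPath vs).Nodup ↔ vs.Nodup := by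
  induction vs with
  | nil => simp
  | cons v vs ih => simp [ih]

theorem isChain_splitPath {vs : List V} :
    (splitPath vs).IsChain (DbarAdj G) ↔ vs.IsChain G.Adj := by
  induction vs with
  | nil => simp
  | cons v vs ih =>
    cases vs with
    | nil => simp
    | cons w vs =>
      rw [splitPath_cons, List.isChain_cons_cons, List.isChain_cons_cons, ← ih, splitPath_cons,
        List.isChain_cons_cons]
      simp

theorem exists_eq_splitPath : ∀ {l : List (V × Bool)}, l.IsChain (DbarAdj G) →
    (∃ v, l.head? = some (v, false)) → (∃ w, l.getLast? = some (w, true)) →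
    ∃ vs, l = splitPath vs
  | [], _, ⟨_, hhead⟩, _ => by simp at hhead
  | [_], _, ⟨_, hhead⟩, ⟨_, hlast⟩ => by simp_all
  | x :: y :: rest, hchain, ⟨v, hhead⟩, ⟨w, hlast⟩ => by
    obtain rfl : x = (v, false) := by simpa using hhead
    rw [List.isChain_cons_cons, dbarAdj_false_left_iff] at hchain
    obtain ⟨rfl, hchain⟩ := hchain
    cases rest with
    | nil => exact ⟨[v], rfl⟩
    | cons z rest =>
      obtain ⟨hvz, hchain⟩ := List.isChain_cons_cons.mp hchain
      have hz : z.2 = false := (dbarAdj_true_left_iff.mp hvz).1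
      rw [List.getLast?_cons_cons, List.getLast?_cons_cons] at hlast
      obtain ⟨vs, hvs⟩ := exists_eq_splitPath hchain ⟨z.1, by rw [List.head?_cons, ← hz]⟩ ⟨w, hlast⟩
      exact ⟨v :: vs, by rw [splitPath_cons, hvs]⟩

end

theorem stmt3_general {V : Type*} (G : SimpleGraph V)
    (s t : V) :
    (∃ vs : List V, vs.Chain' G.Adj ∧ vs.Nodup ∧
        vs.head? = some s ∧ vs.getLast? = some t ∧ (∀ v : V, v ∈ vs)) ↔
    (∃ l : List (V × Bool), l.Chain' (DbarAdj G) ∧ l.Nodup ∧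
        l.head? = some (s, false) ∧ l.getLast? = some (t, true) ∧
        (∀ x : V × Bool, x ∈ l)) := by
  constructor
  · rintro ⟨vs, hchain, hnodup, hhead, hlast, hmem⟩
    exact ⟨splitPath vs, isChain_splitPath.mpr hchain, nodup_splitPath.mpr hnodup,
      by rw [head?_splitPath, hhead]; rfl, by rw [getLast?_splitPath, hlast]; rfl,
      fun x => mem_splitPath.mpr (hmem x.1)⟩
  · rintro ⟨l, hchain, hnodup, hhead, hlast, hmem⟩
    obtain ⟨vs, rfl⟩ := exists_eq_splitPath hchain ⟨s, hhead⟩ ⟨t, hlast⟩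
    have hhead' : vs.head? = some s :=
      Option.map_injective (Prod.mk_left_injective false) ((head?_splitPath vs).symm.trans hhead)
    have hlast' : vs.getLast? = some t :=
      Option.map_injective (Prod.mk_left_injective true) ((getLast?_splitPath vs).symm.trans hlast)
    exact ⟨vs, isChain_splitPath.mp hchain, nodup_splitPath.mp hnodup, hhead', hlast',
      fun v => mem_splitPath.mp (hmem (v, false))⟩

/-- Correctness of the reduction: `G` contains a Hamiltonian `s`-`t` path if and only if
`Ḡ` contains a directed Hamiltonian path from `(s,1)` to `(t,2)`, i.e., a directed path
(consecutive pairs are edges of `Ḡ`, vertices pairwise distinct) from `(s,1)` to `(t,2)`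
visiting every vertex of `V × {1,2}` exactly once. -/
theorem stmt3 {V : Type*} [Fintype V] [DecidableEq V] (G : SimpleGraph V)
    (s t : V) (hst : s ≠ t) :
    (∃ vs : List V, vs.Chain' G.Adj ∧ vs.Nodup ∧
        vs.head? = some s ∧ vs.getLast? = some t ∧ (∀ v : V, v ∈ vs)) ↔
    (∃ l : List (V × Bool), l.Chain' (DbarAdj G) ∧ l.Nodup ∧
        l.head? = some (s, false) ∧ l.getLast? = some (t, true) ∧
        (∀ x : V × Bool, x ∈ l)) :=
  stmt3_general G s t
end
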